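/- Let f_m be a generalized spherical harmonic of degree m (a homogeneous polynomial of degree m with Δ_α f_m = 0) and γ ∈ ℝ. Then for all x ≠ 0: r^{2(m-γ)} · f_m(D_0,...,D_k)[r^{2γ}] = 2^m (-1)^m (-γ)_m · f_m(x). -/

import Mathlib

open MvPolynomial

variable {k : ℕ}

/-- Reflection of the `j`-th variable: the algebra map sending `X j ↦ -X j`. -/
noncomputable def reflectVar (j : Fin (k + 1)) :
    MvPolynomial (Fin (k + 1)) ℝ →ₐ[ℝ] MvPolynomial (Fin (k + 1)) ℝ :=
  aeval (fun i => if i = j then -X i else X i)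

/-- The `j`-th Dunkl operator on polynomials (exact division by `x_j` via `divMonomial`). -/
noncomputable def dunklD (α : Fin (k + 1) → ℝ) (j : Fin (k + 1))
    (p : MvPolynomial (Fin (k + 1)) ℝ) : MvPolynomial (Fin (k + 1)) ℝ :=
  pderiv j p + C (α j) * (p - reflectVar j p).divMonomial (Finsupp.single j 1)

/-- The Dunkl Laplacian `Δ_α = ∑_j D_j²` on polynomials. -/
noncomputable def dunklLap (α : Fin (k + 1) → ℝ)
    (p : MvPolynomial (Fin (k + 1)) ℝ) : MvPolynomial (Fin (k + 1)) ℝ :=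
  ∑ j, dunklD α j (dunklD α j p)

/-- The `j`-th Dunkl operator acting on functions:
`D_j f (x) = ∂_j f(x) + α_j (f(x) - f(σ_j x))/x_j`. -/
noncomputable def dunklF (α : Fin (k + 1) → ℝ) (j : Fin (k + 1))
    (f : (Fin (k + 1) → ℝ) → ℝ) : (Fin (k + 1) → ℝ) → ℝ :=
  fun x => fderiv ℝ f x (Pi.single j 1)
    + α j * (f x - f (Function.update x j (-(x j)))) / x j

/-- The differential-difference operator `D^β = D_0^{β_0} ∘ ⋯ ∘ D_k^{β_k}`
associated to a monomial exponent `β` (the Dunkl operators commute, so the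
order of composition is immaterial). -/
noncomputable def dunklMonomialOp (α : Fin (k + 1) → ℝ) (β : Fin (k + 1) →₀ ℕ)
    (f : (Fin (k + 1) → ℝ) → ℝ) : (Fin (k + 1) → ℝ) → ℝ :=
  (List.ofFn fun j : Fin (k + 1) => (dunklF α j)^[β j]).foldr (· ∘ ·) id f

/-- `f(D_0,…,D_k)` for a polynomial `f`: substitute the Dunkl operators for the variables. -/
noncomputable def dunklOp (α : Fin (k + 1) → ℝ) (p : MvPolynomial (Fin (k + 1)) ℝ)
    (f : (Fin (k + 1) → ℝ) → ℝ) : (Fin (k + 1) → ℝ) → ℝ :=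
  fun x => ∑ β ∈ p.support, coeff β p * dunklMonomialOp α β f x

lemma reflectVar_X (j i : Fin (k + 1)) :
    reflectVar j (X i) = if i = j then -X i else X i := by
  simp [reflectVar]

lemma reflectVar_monomial (j : Fin (k + 1)) (β : Fin (k + 1) →₀ ℕ) (c : ℝ) :
    reflectVar j (monomial β c) = ((-1 : ℝ) ^ (β j)) • monomial β c := by
  classical
  rw [show (monomial β c : MvPolynomial (Fin (k+1)) ℝ) = C c * β.prod fun i n => X i ^ n from
    monomial_eq]
  have hC : reflectVar j (C c) = C c := by simp [reflectVar]
  rw [map_mul, hC]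
  simp only [Finsupp.prod]
  rw [map_prod]
  by_cases hj : β j = 0
  · have : ∀ i ∈ β.support, reflectVar j (X i ^ β i) = X i ^ β i := by
      intro i hi
      have hij : i ≠ j := by
        intro h; subst h; exact (Finsupp.mem_support_iff.mp hi) hj
      rw [map_pow, reflectVar_X, if_neg hij]
    rw [Finset.prod_congr rfl this, hj, pow_zero, one_smul]
  · have hjs : j ∈ β.support := Finsupp.mem_support_iff.mpr hj
    rw [← Finset.mul_prod_erase _ _ hjs, ← Finset.mul_prod_erase _ (fun i => X i ^ β i) hjs]
    have h1 : reflectVar j (X j ^ β j) = ((-1:ℝ) ^ β j) • (X j ^ β j) := by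
      rw [map_pow, reflectVar_X, if_pos rfl, neg_pow]
      simp [smul_pow, MvPolynomial.smul_eq_C_mul, map_pow]
    have h2 : ∀ i ∈ β.support.erase j, reflectVar j (X i ^ β i) = X i ^ β i := by
      intro i hi
      rw [map_pow, reflectVar_X, if_neg (Finset.ne_of_mem_erase hi)]
    rw [Finset.prod_congr rfl h2, h1, smul_mul_assoc, mul_smul_comm]

lemma coeff_reflectVar (j : Fin (k + 1)) (q : MvPolynomial (Fin (k + 1)) ℝ)
    (τ : Fin (k + 1) →₀ ℕ) :
    coeff τ (reflectVar j q) = (-1 : ℝ) ^ (τ j) * coeff τ q := by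
  classical
  induction q using MvPolynomial.induction_on' with
  | monomial β c =>
    rw [reflectVar_monomial, coeff_smul, coeff_monomial]
    by_cases h : β = τ
    · subst h; simp [smul_eq_mul, mul_comm]
    · simp [h, smul_eq_mul]
  | add p q hp hq => rw [map_add, coeff_add, coeff_add, hp, hq]; ring

/-- Exact division: `X j` divides `q - σ_j q`. -/
lemma X_mul_divMonomial_reflect (j : Fin (k + 1)) (q : MvPolynomial (Fin (k + 1)) ℝ) :
    X j * (q - reflectVar j q).divMonomial (Finsupp.single j 1) = q - reflectVar j q := by
  classical
  ext τ
  rw [coeff_X_mul']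
  by_cases h : j ∈ τ.support
  · rw [if_pos h, coeff_divMonomial]
    congr 1
    ext i
    by_cases hij : i = j
    · subst hij
      have : 1 ≤ τ i := Nat.one_le_iff_ne_zero.mpr (Finsupp.mem_support_iff.mp h)
      simp [Finsupp.single_apply]
      omega
    · simp [Finsupp.single_apply, Ne.symm hij]
  · rw [if_neg h]
    have hτ : τ j = 0 := by simpa using fun hc => h (Finsupp.mem_support_iff.mpr hc)
    rw [coeff_sub, coeff_reflectVar, hτ, pow_zero, one_mul, sub_self]

lemma divMonomial_monomial_single (j : Fin (k + 1)) (β : Fin (k + 1) →₀ ℕ) (c : ℝ)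
    (h : β j ≠ 0) :
    (monomial β c).divMonomial (Finsupp.single j 1) = monomial (β - Finsupp.single j 1) c := by
  classical
  have hβ : β = Finsupp.single j 1 + (β - Finsupp.single j 1) := by
    ext i
    by_cases hij : i = j
    · subst hij; simp [Finsupp.single_apply]; omega
    · simp [Finsupp.single_apply, Ne.symm hij, hij]
  rw [show (monomial β c : MvPolynomial (Fin (k+1)) ℝ)
      = monomial (Finsupp.single j 1) 1 * monomial (β - Finsupp.single j 1) c by
    rw [monomial_mul, one_mul, ← hβ]]
  exact MvPolynomial.divMonomial_monomial_mul _ _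

lemma dunklD_monomial (α : Fin (k + 1) → ℝ) (j : Fin (k + 1)) (β : Fin (k + 1) →₀ ℕ) (c : ℝ) :
    dunklD α j (monomial β c) =
      monomial (β - Finsupp.single j 1) (c * (β j + α j * (1 - (-1 : ℝ) ^ (β j)))) := by
  classical
  rw [dunklD, pderiv_monomial, reflectVar_monomial]
  have : (monomial β c : MvPolynomial (Fin (k+1)) ℝ) - ((-1:ℝ) ^ β j) • monomial β c
      = monomial β (c * (1 - (-1:ℝ) ^ β j)) := by
    rw [smul_monomial, ← map_sub]
    congr 1
    simp [smul_eq_mul]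
    ring
  rw [this]
  by_cases h : β j = 0
  · rw [h]
    simp only [pow_zero, sub_self, mul_zero, map_zero, MvPolynomial.zero_divMonomial]
    simp [h]
  · rw [divMonomial_monomial_single _ _ _ h, C_mul_monomial, ← map_add]
    congr 1
    ring

lemma divMonomial_smul (s : Fin (k+1) →₀ ℕ) (c : ℝ) (p : MvPolynomial (Fin (k + 1)) ℝ) :
    (c • p).divMonomial s = c • p.divMonomial s := by
  ext τ
  rw [MvPolynomial.coeff_divMonomial, coeff_smul, coeff_smul, MvPolynomial.coeff_divMonomial]

lemma dunklD_add (α : Fin (k + 1) → ℝ) (j : Fin (k + 1)) (p q : MvPolynomial (Fin (k + 1)) ℝ) :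
    dunklD α j (p + q) = dunklD α j p + dunklD α j q := by
  unfold dunklD
  rw [map_add, map_add]
  have h : p + q - (reflectVar j p + reflectVar j q)
      = (p - reflectVar j p) + (q - reflectVar j q) := by ring
  rw [h, MvPolynomial.add_divMonomial]
  ring

lemma dunklD_smul (α : Fin (k + 1) → ℝ) (j : Fin (k + 1)) (c : ℝ)
    (p : MvPolynomial (Fin (k + 1)) ℝ) :
    dunklD α j (c • p) = c • dunklD α j p := by
  unfold dunklD
  rw [show reflectVar j (c • p) = c • reflectVar j p from map_smul _ c p,
    show (pderiv j) (c • p) = c • pderiv j p from Derivation.map_smul _ c p,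
    ← smul_sub, divMonomial_smul]
  rw [smul_add, mul_smul_comm]

/-- Bundled linear map version of `dunklD`. -/
noncomputable def dunklDL (α : Fin (k + 1) → ℝ) (j : Fin (k + 1)) :
    MvPolynomial (Fin (k + 1)) ℝ →ₗ[ℝ] MvPolynomial (Fin (k + 1)) ℝ where
  toFun := dunklD α j
  map_add' := dunklD_add α j
  map_smul' := dunklD_smul α j

lemma dunklD_sum {ι : Type*} (α : Fin (k + 1) → ℝ) (j : Fin (k + 1)) (s : Finset ι)
    (f : ι → MvPolynomial (Fin (k + 1)) ℝ) :
    dunklD α j (∑ i ∈ s, f i) = ∑ i ∈ s, dunklD α j (f i) :=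
  map_sum (dunklDL α j) f s

lemma dunklLap_add (α : Fin (k + 1) → ℝ) (p q : MvPolynomial (Fin (k + 1)) ℝ) :
    dunklLap α (p + q) = dunklLap α p + dunklLap α q := by
  unfold dunklLap
  rw [← Finset.sum_add_distrib]
  exact Finset.sum_congr rfl fun j _ => by rw [dunklD_add, dunklD_add]

lemma dunklLap_smul (α : Fin (k + 1) → ℝ) (c : ℝ) (p : MvPolynomial (Fin (k + 1)) ℝ) :
    dunklLap α (c • p) = c • dunklLap α p := by
  unfold dunklLap
  rw [Finset.smul_sum]
  exact Finset.sum_congr rfl fun j _ => by rw [dunklD_smul, dunklD_smul]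

lemma dunklLap_zero (α : Fin (k + 1) → ℝ) : dunklLap α 0 = 0 := by
  have := dunklLap_smul α 0 0
  simpa using this

lemma dunklD_comm (α : Fin (k + 1) → ℝ) (i j : Fin (k + 1))
    (q : MvPolynomial (Fin (k + 1)) ℝ) :
    dunklD α i (dunklD α j q) = dunklD α j (dunklD α i q) := by
  classical
  by_cases hij : i = j
  · subst hij; rfl
  induction q using MvPolynomial.induction_on' with
  | add p q hp hq => rw [dunklD_add, dunklD_add, dunklD_add, dunklD_add, hp, hq]
  | monomial β c =>
    rw [dunklD_monomial, dunklD_monomial, dunklD_monomial, dunklD_monomial]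
    have h1 : (β - Finsupp.single j 1 : Fin (k+1) →₀ ℕ) i = β i := by
      simp [Finsupp.tsub_apply, Finsupp.single_apply, Ne.symm hij]
    have h2 : (β - Finsupp.single i 1 : Fin (k+1) →₀ ℕ) j = β j := by
      simp [Finsupp.tsub_apply, Finsupp.single_apply, hij]
    have h3 : β - Finsupp.single j 1 - Finsupp.single i 1
        = β - Finsupp.single i 1 - Finsupp.single j 1 := by
      ext t; simp [Finsupp.tsub_apply]; omega
    rw [h1, h2, h3]
    congr 1
    ring

lemma dunklD_reflectVar_same (α : Fin (k + 1) → ℝ) (j : Fin (k + 1))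
    (q : MvPolynomial (Fin (k + 1)) ℝ) :
    dunklD α j (reflectVar j q) = - reflectVar j (dunklD α j q) := by
  classical
  induction q using MvPolynomial.induction_on' with
  | add p q hp hq => rw [map_add, dunklD_add, hp, hq, dunklD_add, map_add]; ring
  | monomial β c =>
    rw [reflectVar_monomial, dunklD_smul, dunklD_monomial, reflectVar_monomial]
    rcases Nat.eq_zero_or_pos (β j) with h | h
    · simp [h]
    · have h1 : (β - Finsupp.single j 1 : Fin (k+1) →₀ ℕ) j = β j - 1 := by
        simp [Finsupp.tsub_apply, Finsupp.single_apply]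
      rw [h1, smul_monomial, smul_monomial, ← map_neg]
      congr 1
      have h2 : (-1 : ℝ) ^ (β j) = -(-1 : ℝ) ^ (β j - 1) := by
        rw [show β j = (β j - 1) + 1 by omega, pow_succ]
        simp
      rw [smul_eq_mul, smul_eq_mul, h2]
      ring

lemma X_mul_monomial'' (j : Fin (k + 1)) (β : Fin (k + 1) →₀ ℕ) (c : ℝ) :
    X j * monomial β c = monomial (Finsupp.single j 1 + β) c := by
  rw [X, monomial_mul, one_mul]

lemma dunklD_C_mul (α : Fin (k + 1) → ℝ) (j : Fin (k + 1)) (a : ℝ)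
    (q : MvPolynomial (Fin (k + 1)) ℝ) :
    dunklD α j (C a * q) = C a * dunklD α j q := by
  rw [← smul_eq_C_mul, ← smul_eq_C_mul, dunklD_smul]

lemma dunklD_X_mul_ne (α : Fin (k + 1) → ℝ) {i j : Fin (k + 1)} (hij : i ≠ j)
    (q : MvPolynomial (Fin (k + 1)) ℝ) :
    dunklD α i (X j * q) = X j * dunklD α i q := by
  classical
  induction q using MvPolynomial.induction_on' with
  | add p q hp hq => rw [mul_add, dunklD_add, hp, hq, dunklD_add, mul_add]
  | monomial β c =>
    rw [X_mul_monomial'', dunklD_monomial, dunklD_monomial, X_mul_monomial'']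
    have h1 : (Finsupp.single j 1 + β : Fin (k+1) →₀ ℕ) i = β i := by
      simp [Finsupp.single_apply, Ne.symm hij]
    have h2 : Finsupp.single j 1 + β - Finsupp.single i 1
        = Finsupp.single j 1 + (β - Finsupp.single i 1) := by
      ext t
      simp only [Finsupp.tsub_apply, Finsupp.coe_add, Pi.add_apply, Finsupp.single_apply]
      split_ifs with h h' <;> omega
    rw [h1, h2]

lemma reflectVar_X_mul_same (j : Fin (k + 1)) (h : MvPolynomial (Fin (k + 1)) ℝ) :
    reflectVar j (X j * h) = - (X j * reflectVar j h) := by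
  rw [map_mul, reflectVar_X, if_pos rfl, neg_mul]

lemma dunklD_X_mul_same (α : Fin (k + 1) → ℝ) (j : Fin (k + 1))
    (q : MvPolynomial (Fin (k + 1)) ℝ) :
    dunklD α j (X j * q) = X j * dunklD α j q + q + C (2 * α j) * reflectVar j q := by
  classical
  induction q using MvPolynomial.induction_on' with
  | add p q hp hq =>
    rw [mul_add, dunklD_add, hp, hq, dunklD_add, map_add, mul_add, mul_add]
    ring
  | monomial β c =>
    rw [X_mul_monomial'', dunklD_monomial, dunklD_monomial, reflectVar_monomial]
    have h1 : (Finsupp.single j 1 + β : Fin (k+1) →₀ ℕ) j = β j + 1 := by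
      simp [Finsupp.single_apply]; omega
    have h2 : Finsupp.single j 1 + β - Finsupp.single j 1 = β :=
      add_tsub_cancel_left _ _
    rw [h1, h2]
    rcases Nat.eq_zero_or_pos (β j) with h | h
    · have hβ : β - Finsupp.single j 1 = β := by
        ext t
        simp only [Finsupp.tsub_apply, Finsupp.single_apply]
        split_ifs with ht
        · subst ht; omega
        · omega
      rw [hβ, h]
      rw [smul_monomial, ← smul_eq_C_mul, smul_monomial]
      rw [show c * (↑(0:ℕ) + α j * (1 - (-1:ℝ) ^ (0:ℕ))) = 0 by norm_num, map_zero, mul_zero]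
      simp only [smul_eq_mul, pow_zero, one_mul]
      rw [show c * ((↑(1:ℕ) : ℝ) + α j * (1 - (-1:ℝ) ^ (1:ℕ))) = c + 2 * α j * c by
        push_cast; ring, map_add]
      ring
    · have h3 : Finsupp.single j 1 + (β - Finsupp.single j 1) = β := by
        ext t
        simp only [Finsupp.tsub_apply, Finsupp.coe_add, Pi.add_apply, Finsupp.single_apply]
        split_ifs with ht
        · subst ht; omega
        · omega
      rw [X_mul_monomial'', h3, smul_monomial, ← smul_eq_C_mul, smul_monomial,
        ← map_add, ← map_add]
      congr 1
      simp only [smul_eq_mul]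
      push_cast
      rw [pow_succ]
      ring

noncomputable def r2 : MvPolynomial (Fin (k + 1)) ℝ := ∑ i, X i ^ 2

lemma dunklD_r2_mul (α : Fin (k + 1) → ℝ) (j : Fin (k + 1))
    (h : MvPolynomial (Fin (k + 1)) ℝ) :
    dunklD α j (r2 * h) = C 2 * (X j * h) + r2 * dunklD α j h := by
  classical
  have key : ∀ i, dunklD α j (X i ^ 2 * h)
      = X i ^ 2 * dunklD α j h + (if i = j then C 2 * (X j * h) else 0) := by
    intro i
    by_cases hij : i = j
    · subst hij
      rw [if_pos rfl, show (X i ^ 2 * h : MvPolynomial (Fin (k+1)) ℝ) = X i * (X i * h) by ring,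
        dunklD_X_mul_same, dunklD_X_mul_same, reflectVar_X_mul_same,
        show (C 2 : MvPolynomial (Fin (k+1)) ℝ) = 2 from map_ofNat _ 2]
      ring
    · rw [if_neg hij, show (X i ^ 2 * h : MvPolynomial (Fin (k+1)) ℝ) = X i * (X i * h) by ring,
        dunklD_X_mul_ne α (Ne.symm hij), dunklD_X_mul_ne α (Ne.symm hij)]
      rw [add_zero]
      ring
  rw [r2, Finset.sum_mul, dunklD_sum]
  rw [Finset.sum_congr rfl fun i _ => key i, Finset.sum_add_distrib, ← Finset.sum_mul,
    Finset.sum_ite_eq' Finset.univ j (fun _ => C 2 * (X j * h))]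
  simp [r2]
  ring
lemma dunklD_r2pow_mul (α : Fin (k + 1) → ℝ) (j : Fin (k + 1)) (i : ℕ)
    (h : MvPolynomial (Fin (k + 1)) ℝ) :
    dunklD α j (r2 ^ (i + 1) * h)
      = C (2 * (i + 1) : ℝ) * (X j * (r2 ^ i * h)) + r2 ^ (i + 1) * dunklD α j h := by
  induction i generalizing h with
  | zero =>
    rw [pow_one, pow_zero, dunklD_r2_mul]
    push_cast
    norm_num
  | succ i ih =>
    rw [show (r2 ^ (i + 2) * h : MvPolynomial (Fin (k+1)) ℝ) = r2 * (r2 ^ (i+1) * h) by ring,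
      dunklD_r2_mul, ih]
    push_cast
    rw [show ((2 * ((i:ℝ) + 1 + 1)) : ℝ) = 2 + 2 * ((i:ℝ)+1) by ring, map_add]
    ring

lemma dunklLap_C_mul (α : Fin (k + 1) → ℝ) (a : ℝ) (q : MvPolynomial (Fin (k + 1)) ℝ) :
    dunklLap α (C a * q) = C a * dunklLap α q := by
  unfold dunklLap
  rw [Finset.mul_sum]
  exact Finset.sum_congr rfl fun i _ => by rw [dunklD_C_mul, dunklD_C_mul]

lemma dunklLap_X_mul (α : Fin (k + 1) → ℝ) (j : Fin (k + 1))
    (q : MvPolynomial (Fin (k + 1)) ℝ) :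
    dunklLap α (X j * q) = X j * dunklLap α q + C 2 * dunklD α j q := by
  classical
  unfold dunklLap
  have key : ∀ i, dunklD α i (dunklD α i (X j * q))
      = X j * dunklD α i (dunklD α i q) + (if i = j then C 2 * dunklD α j q else 0) := by
    intro i
    by_cases hij : i = j
    · subst hij
      rw [if_pos rfl, dunklD_X_mul_same, dunklD_add, dunklD_add, dunklD_X_mul_same,
        dunklD_C_mul, dunklD_reflectVar_same,
        show (C 2 : MvPolynomial (Fin (k+1)) ℝ) = 2 from map_ofNat _ 2]
      ring
    · rw [if_neg hij, dunklD_X_mul_ne α hij, dunklD_X_mul_ne α hij, add_zero]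
  rw [Finset.sum_congr rfl fun i _ => key i, Finset.sum_add_distrib,
    Finset.sum_ite_eq' Finset.univ j (fun _ => C 2 * dunklD α j q), ← Finset.mul_sum]
  simp

lemma dunklLap_dunklD (α : Fin (k + 1) → ℝ) (j : Fin (k + 1))
    (q : MvPolynomial (Fin (k + 1)) ℝ) :
    dunklLap α (dunklD α j q) = dunklD α j (dunklLap α q) := by
  unfold dunklLap
  rw [dunklD_sum]
  exact Finset.sum_congr rfl fun i _ => by
    rw [dunklD_comm α i j, dunklD_comm α i j (dunklD α i q)]

lemma dunklLap_iter_dunklD (α : Fin (k + 1) → ℝ) (j : Fin (k + 1)) (i : ℕ)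
    (q : MvPolynomial (Fin (k + 1)) ℝ) :
    (dunklLap α)^[i] (dunklD α j q) = dunklD α j ((dunklLap α)^[i] q) := by
  induction i generalizing q with
  | zero => rfl
  | succ i ih => rw [Function.iterate_succ_apply, Function.iterate_succ_apply,
      dunklLap_dunklD, ih]

lemma dunklLap_iter_add (α : Fin (k + 1) → ℝ) (i : ℕ) (p q : MvPolynomial (Fin (k + 1)) ℝ) :
    (dunklLap α)^[i] (p + q) = (dunklLap α)^[i] p + (dunklLap α)^[i] q := by
  induction i generalizing p q with
  | zero => rfl
  | succ i ih => rw [Function.iterate_succ_apply, Function.iterate_succ_apply,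
      Function.iterate_succ_apply, dunklLap_add, ih]

lemma dunklLap_iter_smul (α : Fin (k + 1) → ℝ) (i : ℕ) (c : ℝ)
    (q : MvPolynomial (Fin (k + 1)) ℝ) :
    (dunklLap α)^[i] (c • q) = c • (dunklLap α)^[i] q := by
  induction i generalizing q with
  | zero => rfl
  | succ i ih => rw [Function.iterate_succ_apply, Function.iterate_succ_apply,
      dunklLap_smul, ih]

lemma dunklLap_iter_zero (α : Fin (k + 1) → ℝ) (i : ℕ) :
    (dunklLap α)^[i] (0 : MvPolynomial (Fin (k + 1)) ℝ) = 0 :=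
  Function.iterate_fixed (dunklLap_zero α) i

lemma dunklLap_iter_X_mul (α : Fin (k + 1) → ℝ) (j : Fin (k + 1)) (i : ℕ)
    (q : MvPolynomial (Fin (k + 1)) ℝ) :
    (dunklLap α)^[i + 1] (X j * q)
      = X j * (dunklLap α)^[i + 1] q + C (2 * (i + 1) : ℝ) * (dunklLap α)^[i] (dunklD α j q) := by
  induction i generalizing q with
  | zero =>
    rw [Function.iterate_one, Function.iterate_zero, dunklLap_X_mul]
    norm_num
  | succ i ih =>
    rw [Function.iterate_succ_apply, dunklLap_X_mul, dunklLap_iter_add,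
      show ((dunklLap α)^[i+1] (C 2 * dunklD α j q)) = C 2 * (dunklLap α)^[i+1] (dunklD α j q) by
        rw [← smul_eq_C_mul, ← smul_eq_C_mul, dunklLap_iter_smul], ih]
    rw [show (dunklLap α)^[i+1] (dunklD α j q) = (dunklLap α)^[i] (dunklD α j (dunklLap α q)) by
        rw [Function.iterate_succ_apply, dunklLap_dunklD],
      show (dunklLap α)^[i+1+1] q = (dunklLap α)^[i+1] (dunklLap α q) from
        Function.iterate_succ_apply _ _ _]
    push_cast
    rw [show ((2 * ((i:ℝ) + 1 + 1)) : ℝ) = 2 * ((i:ℝ)+1) + 2 by ring, map_add]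
    ring
lemma degree_sub_single {β : Fin (k + 1) →₀ ℕ} {j : Fin (k + 1)} (h : β j ≠ 0) :
    (β - Finsupp.single j 1).degree = β.degree - 1 ∧ 1 ≤ β.degree := by
  have hβ : β = (β - Finsupp.single j 1) + Finsupp.single j 1 := by
    ext t
    simp only [Finsupp.tsub_apply, Finsupp.coe_add, Pi.add_apply, Finsupp.single_apply]
    split_ifs with ht
    · subst ht; omega
    · omega
  have hadd : β.degree = (β - Finsupp.single j 1).degree + (Finsupp.single j 1).degree := by
    conv_lhs => rw [hβ]
    simp only [Finsupp.degree_eq_weight_one]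
    exact map_add _ _ _
  have hone : (Finsupp.single j (1:ℕ)).degree = 1 := by
    simp [Finsupp.degree_single]
  constructor
  · omega
  · omega

lemma mem_support_degree {q : MvPolynomial (Fin (k + 1)) ℝ} {n : ℕ}
    (hq : q.IsHomogeneous n) {β : Fin (k + 1) →₀ ℕ} (h : β ∈ q.support) : β.degree = n := by
  have := hq (MvPolynomial.mem_support_iff.mp h)
  rw [Finsupp.degree_eq_weight_one]
  exact this

lemma isHomogeneous_zero' (n : ℕ) : (0 : MvPolynomial (Fin (k + 1)) ℝ).IsHomogeneous n :=
  fun d hd => absurd (coeff_zero d) hd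

lemma dunklD_eq_sum (α : Fin (k + 1) → ℝ) (j : Fin (k + 1))
    (q : MvPolynomial (Fin (k + 1)) ℝ) :
    dunklD α j q = ∑ β ∈ q.support,
      monomial (β - Finsupp.single j 1)
        ((coeff β q) * (β j + α j * (1 - (-1 : ℝ) ^ (β j)))) := by
  conv_lhs => rw [← support_sum_monomial_coeff q]
  rw [dunklD_sum]
  exact Finset.sum_congr rfl fun β _ => dunklD_monomial α j β (coeff β q)

lemma dunklD_isHomogeneous (α : Fin (k + 1) → ℝ) (j : Fin (k + 1))
    {q : MvPolynomial (Fin (k + 1)) ℝ} {n : ℕ} (hq : q.IsHomogeneous n) :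
    (dunklD α j q).IsHomogeneous (n - 1) := by
  rw [dunklD_eq_sum]
  apply MvPolynomial.IsHomogeneous.sum
  intro β hβ
  by_cases hj : β j = 0
  · rw [show (coeff β q) * ((β j : ℝ) + α j * (1 - (-1 : ℝ) ^ (β j)))
        = 0 by rw [hj]; norm_num, map_zero]
    exact isHomogeneous_zero' _
  · apply isHomogeneous_monomial
    have := degree_sub_single (β := β) (j := j) hj
    rw [this.1, mem_support_degree hq hβ]

lemma dunklD_of_isHomogeneous_zero (α : Fin (k + 1) → ℝ) (j : Fin (k + 1))
    {q : MvPolynomial (Fin (k + 1)) ℝ} (hq : q.IsHomogeneous 0) :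
    dunklD α j q = 0 := by
  rw [dunklD_eq_sum]
  apply Finset.sum_eq_zero
  intro β hβ
  have h0 : β.degree = 0 := mem_support_degree hq hβ
  have hβ0 : β = 0 := (Finsupp.degree_eq_zero_iff β).mp h0
  rw [show β j = 0 by rw [hβ0]; rfl]
  norm_num

lemma dunklLap_isHomogeneous (α : Fin (k + 1) → ℝ)
    {q : MvPolynomial (Fin (k + 1)) ℝ} {n : ℕ} (hq : q.IsHomogeneous n) :
    (dunklLap α q).IsHomogeneous (n - 2) := by
  unfold dunklLap
  apply MvPolynomial.IsHomogeneous.sum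
  intro j _
  have h1 := dunklD_isHomogeneous α j (dunklD_isHomogeneous α j hq)
  rwa [show n - 1 - 1 = n - 2 by omega] at h1

lemma dunklLap_of_low_degree (α : Fin (k + 1) → ℝ)
    {q : MvPolynomial (Fin (k + 1)) ℝ} {n : ℕ} (hn : n < 2) (hq : q.IsHomogeneous n) :
    dunklLap α q = 0 := by
  unfold dunklLap
  apply Finset.sum_eq_zero
  intro j _
  interval_cases n
  · rw [dunklD_of_isHomogeneous_zero α j hq, show (0 : MvPolynomial (Fin (k+1)) ℝ)
      = C 0 * 0 by simp, dunklD_C_mul]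
    simp
  · exact dunklD_of_isHomogeneous_zero α j
      (by simpa using dunklD_isHomogeneous α j hq)

lemma dunklLap_iter_eq_zero (α : Fin (k + 1) → ℝ) (i : ℕ) :
    ∀ (n : ℕ) (q : MvPolynomial (Fin (k + 1)) ℝ),
      q.IsHomogeneous n → n < 2 * i → (dunklLap α)^[i] q = 0 := by
  induction i with
  | zero => intro n q _ h; omega
  | succ i ih =>
    intro n q hq h
    rw [Function.iterate_succ_apply]
    by_cases hn : n < 2
    · rw [dunklLap_of_low_degree α hn hq, dunklLap_iter_zero]
    · exact ih (n - 2) _ (dunklLap_isHomogeneous α hq) (by omega)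
section FoldMachinery

variable {A : Type*}

lemma foldr_comp_apply (l : List (A → A)) (a : A) :
    (l.foldr (· ∘ ·) id) a = l.foldr (fun g x => g x) a := by
  induction l generalizing a with
  | nil => rfl
  | cons g l ih => simp only [List.foldr_cons, Function.comp_apply, ih]

lemma ofFn_foldr_eq (g : Fin (k + 1) → A → A) (a : A) :
    ((List.ofFn g).foldr (· ∘ ·) id) a
      = (List.finRange (k + 1)).foldr (fun j x => g j x) a := by
  rw [List.ofFn_eq_map, foldr_comp_apply, List.foldr_map]

lemma foldr_iter_of_zero (S : Fin (k + 1) → A → A) (β : Fin (k + 1) → ℕ)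
    (l : List (Fin (k + 1))) (hl : ∀ i ∈ l, β i = 0) (a : A) :
    l.foldr (fun i x => (S i)^[β i] x) a = a := by
  induction l with
  | nil => rfl
  | cons i l ih =>
    rw [List.foldr_cons, hl i List.mem_cons_self, Function.iterate_zero,
      ih fun t ht => hl t (List.mem_cons_of_mem i ht)]
    rfl

lemma foldr_iter_congr (S : Fin (k + 1) → A → A) (β β' : Fin (k + 1) → ℕ)
    (l : List (Fin (k + 1))) (hl : ∀ i ∈ l, β i = β' i) (a : A) :
    l.foldr (fun i x => (S i)^[β i] x) a = l.foldr (fun i x => (S i)^[β' i] x) a := by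
  induction l generalizing a with
  | nil => rfl
  | cons i l ih =>
    rw [List.foldr_cons, List.foldr_cons, hl i List.mem_cons_self,
      ih fun t ht => hl t (List.mem_cons_of_mem i ht)]

lemma foldr_iter_peel (S : Fin (k + 1) → A → A) (β : Fin (k + 1) →₀ ℕ)
    (j : Fin (k + 1)) (hj : β j ≠ 0) (hmin : ∀ i, i < j → β i = 0) (a : A) :
    (List.finRange (k + 1)).foldr (fun i x => (S i)^[β i] x) a
      = S j ((List.finRange (k + 1)).foldr
          (fun i x => (S i)^[(β - Finsupp.single j 1 : Fin (k+1) →₀ ℕ) i] x) a) := by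
  classical
  obtain ⟨l₁, l₂, hl⟩ := List.append_of_mem (List.mem_finRange j)
  have hpw : (l₁ ++ j :: l₂).Pairwise (· < ·) := by
    rw [← hl]; exact List.pairwise_lt_finRange (k + 1)
  rw [List.pairwise_append] at hpw
  have hjl₂ : ∀ y ∈ l₂, j < y := fun y hy => List.rel_of_pairwise_cons hpw.2.1 hy
  have hl₁ : ∀ x ∈ l₁, β x = 0 := fun x hx =>
    hmin x (hpw.2.2 x hx j List.mem_cons_self)
  have hl₁' : ∀ x ∈ l₁, (β - Finsupp.single j 1 : Fin (k+1) →₀ ℕ) x = 0 := by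
    intro x hx
    have hxj : x ≠ j := ne_of_lt (hpw.2.2 x hx j List.mem_cons_self)
    simp [Finsupp.tsub_apply, Finsupp.single_apply, Ne.symm hxj, hl₁ x hx]
  have hl₂ : ∀ i ∈ l₂, (β - Finsupp.single j 1 : Fin (k+1) →₀ ℕ) i = β i := by
    intro i hi
    have hij : i ≠ j := ne_of_gt (hjl₂ i hi)
    simp [Finsupp.tsub_apply, Finsupp.single_apply, Ne.symm hij]
  have hsubj : (β - Finsupp.single j 1 : Fin (k+1) →₀ ℕ) j = β j - 1 := by
    simp [Finsupp.tsub_apply, Finsupp.single_apply]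
  rw [hl, List.foldr_append, List.foldr_append, List.foldr_cons, List.foldr_cons]
  rw [foldr_iter_of_zero S _ l₁ hl₁, foldr_iter_of_zero S _ l₁ hl₁', hsubj,
    foldr_iter_congr S _ _ l₂ hl₂, show β j = (β j - 1) + 1 by omega,
    Function.iterate_succ_apply', Nat.add_sub_cancel]

end FoldMachinery

noncomputable def pairStep (α : Fin (k + 1) → ℝ) (j : Fin (k + 1)) :
    ℝ × MvPolynomial (Fin (k + 1)) ℝ → ℝ × MvPolynomial (Fin (k + 1)) ℝ :=
  fun cq => (cq.1 - 1, C (2 * cq.1) * (X j * cq.2) + r2 * dunklD α j cq.2)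

noncomputable def pairFold (α : Fin (k + 1) → ℝ) (γ : ℝ) (β : Fin (k + 1) →₀ ℕ) :
    ℝ × MvPolynomial (Fin (k + 1)) ℝ :=
  (List.ofFn fun j : Fin (k + 1) => (pairStep α j)^[β j]).foldr (· ∘ ·) id (γ, (1 : MvPolynomial (Fin (k + 1)) ℝ))

lemma pairFold_zero (α : Fin (k + 1) → ℝ) (γ : ℝ) :
    pairFold α γ 0 = (γ, 1) := by
  unfold pairFold
  rw [ofFn_foldr_eq]
  exact foldr_iter_of_zero _ _ _ (fun i _ => rfl) _

lemma pairFold_peel (α : Fin (k + 1) → ℝ) (γ : ℝ) (β : Fin (k + 1) →₀ ℕ)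
    (j : Fin (k + 1)) (hj : β j ≠ 0) (hmin : ∀ i, i < j → β i = 0) :
    pairFold α γ β = pairStep α j (pairFold α γ (β - Finsupp.single j 1)) := by
  unfold pairFold
  rw [ofFn_foldr_eq, ofFn_foldr_eq]
  exact foldr_iter_peel (pairStep α) β j hj hmin _

/-- Choice of minimal index in the support of a nonzero exponent. -/
lemma exists_min_support (β : Fin (k + 1) →₀ ℕ) (hβ : β ≠ 0) :
    ∃ j, β j ≠ 0 ∧ (∀ i, i < j → β i = 0) ∧
      (β - Finsupp.single j 1).degree + 1 = β.degree := by
  classical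
  have hne : β.support.Nonempty := Finsupp.support_nonempty_iff.mpr hβ
  refine ⟨β.support.min' hne, ?_, ?_, ?_⟩
  · exact Finsupp.mem_support_iff.mp (β.support.min'_mem hne)
  · intro i hi
    by_contra hzero
    exact absurd (β.support.min'_le i (Finsupp.mem_support_iff.mpr hzero)) (not_le.mpr hi)
  · have hj : β (β.support.min' hne) ≠ 0 := Finsupp.mem_support_iff.mp (β.support.min'_mem hne)
    have := degree_sub_single (β := β) (j := β.support.min' hne) hj
    omega

lemma pairFold_fst (α : Fin (k + 1) → ℝ) (γ : ℝ) : ∀ (n : ℕ) (β : Fin (k + 1) →₀ ℕ),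
    β.degree = n → (pairFold α γ β).1 = γ - n := by
  intro n
  induction n with
  | zero =>
    intro β hβ
    rw [(Finsupp.degree_eq_zero_iff β).mp hβ, pairFold_zero]
    norm_num
  | succ n ih =>
    intro β hβ
    have hβne : β ≠ 0 := by
      intro h
      rw [h, map_zero] at hβ
      omega
    obtain ⟨j, hj, hmin, hdeg⟩ := exists_min_support β hβne
    rw [pairFold_peel α γ β j hj hmin, pairStep, ih _ (by omega)]
    push_cast
    ring
noncomputable def mcoef (γ : ℝ) (n i : ℕ) : ℝ :=
  2 ^ n / 4 ^ i / (Nat.factorial i) * ∏ t ∈ Finset.range (n - i), (γ - t)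

lemma mcoef_zero_zero (γ : ℝ) : mcoef γ 0 0 = 1 := by simp [mcoef]

lemma mcoef_succ_left (γ : ℝ) {n i : ℕ} (h : i ≤ n) :
    mcoef γ (n + 1) i = 2 * (γ - n + i) * mcoef γ n i := by
  unfold mcoef
  rw [show n + 1 - i = (n - i) + 1 by omega, Finset.prod_range_succ,
    show ((↑(n - i) : ℝ)) = (n : ℝ) - i by push_cast [h]; ring]
  ring

lemma mcoef_pred (γ : ℝ) (n i : ℕ) :
    mcoef γ n i = 2 * ((i : ℝ) + 1) * mcoef γ (n + 1) (i + 1) := by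
  unfold mcoef
  rw [show n + 1 - (i + 1) = n - i by omega, Nat.factorial_succ]
  have h4 : ((4 : ℝ) ^ (i + 1)) = 4 * 4 ^ i := by ring
  rw [h4]
  have hfac : (Nat.factorial i : ℝ) ≠ 0 := Nat.cast_ne_zero.mpr (Nat.factorial_ne_zero i)
  have h4i : ((4 : ℝ) ^ i) ≠ 0 := by positivity
  push_cast
  field_simp
  ring

lemma single_add_tsub {β : Fin (k + 1) →₀ ℕ} {j : Fin (k + 1)} (h : β j ≠ 0) :
    Finsupp.single j 1 + (β - Finsupp.single j 1) = β := by
  ext t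
  simp only [Finsupp.tsub_apply, Finsupp.coe_add, Pi.add_apply, Finsupp.single_apply]
  split_ifs with ht
  · subst ht; omega
  · omega

lemma dunklD_C_r2pow (α : Fin (k + 1) → ℝ) (j : Fin (k + 1)) (a : ℝ) (i : ℕ)
    (h : MvPolynomial (Fin (k + 1)) ℝ) :
    dunklD α j (C a * (r2 ^ i * h))
      = C (2 * i * a) * (X j * (r2 ^ (i - 1) * h)) + C a * (r2 ^ i * dunklD α j h) := by
  cases i with
  | zero =>
    rw [pow_zero, one_mul, dunklD_C_mul]
    norm_num
  | succ i =>
    rw [dunklD_C_mul, dunklD_r2pow_mul, Nat.add_sub_cancel, mul_add]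
    push_cast
    simp only [map_mul, map_add, map_sub, map_one, map_natCast, map_ofNat]
    ring

theorem master (α : Fin (k + 1) → ℝ) (γ : ℝ) : ∀ (n : ℕ) (β : Fin (k + 1) →₀ ℕ),
    β.degree = n → (pairFold α γ β).2
      = ∑ i ∈ Finset.range (n + 1),
          C (mcoef γ n i) * (r2 ^ i * (dunklLap α)^[i] (monomial β 1)) := by
  intro n
  induction n with
  | zero =>
    intro β hβ
    rw [(Finsupp.degree_eq_zero_iff β).mp hβ, pairFold_zero]
    rw [Finset.sum_range_one, mcoef_zero_zero]
    simp [monomial_zero']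
  | succ n ih =>
    intro β hβ
    have hβne : β ≠ 0 := by
      intro h; rw [h, map_zero] at hβ; omega
    obtain ⟨j, hj, hmin, hdeg⟩ := exists_min_support β hβne
    set β' := β - Finsupp.single j 1 with hβ'
    set q' : MvPolynomial (Fin (k + 1)) ℝ := monomial β' 1 with hq'def
    have hβ'deg : β'.degree = n := by omega
    have hq' : q'.IsHomogeneous n := isHomogeneous_monomial 1 hβ'deg
    have hXq' : X j * q' = monomial β 1 := by
      rw [hq'def, X_mul_monomial'', hβ', single_add_tsub hj]
    have hzero1 : (dunklLap α)^[n] (dunklD α j q') = 0 := by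
      rcases Nat.eq_zero_or_pos n with hn | hn
      · subst hn
        rw [Function.iterate_zero, id, dunklD_of_isHomogeneous_zero α j hq']
      · exact dunklLap_iter_eq_zero α n (n - 1) _ (dunklD_isHomogeneous α j hq') (by omega)
    have hzero2 : (dunklLap α)^[n + 1] (X j * q') = 0 := by
      rw [hXq']
      exact dunklLap_iter_eq_zero α (n + 1) (n + 1) _
        (isHomogeneous_monomial 1 hβ) (by omega)
    rw [pairFold_peel α γ β j hj hmin]
    have hfst : (pairFold α γ β').1 = γ - n := pairFold_fst α γ n β' hβ'deg
    show C (2 * (pairFold α γ β').1) * (X j * (pairFold α γ β').2)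
        + r2 * dunklD α j (pairFold α γ β').2 = _
    rw [hfst, ih β' hβ'deg, ← hXq']
    rw [Finset.mul_sum, Finset.mul_sum, dunklD_sum, Finset.mul_sum, ← Finset.sum_add_distrib]
    -- telescoping function
    set H : ℕ → MvPolynomial (Fin (k + 1)) ℝ := fun i => match i with
      | 0 => 0
      | (i' + 1) => C (mcoef γ n i') * (r2 ^ (i' + 1) * (dunklLap α)^[i'] (dunklD α j q'))
      with hH
    have key : ∀ i ∈ Finset.range (n + 1),
        C (2 * (γ - n)) * (X j * (C (mcoef γ n i) * (r2 ^ i * (dunklLap α)^[i] q')))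
          + r2 * dunklD α j (C (mcoef γ n i) * (r2 ^ i * (dunklLap α)^[i] q'))
        = C (mcoef γ (n + 1) i) * (r2 ^ i * (dunklLap α)^[i] (X j * q'))
          + (H (i + 1) - H i) := by
      intro i hi
      have hin : i ≤ n := by
        have := Finset.mem_range.mp hi; omega
      cases i with
      | zero =>
        simp only [hH, pow_zero, one_mul, pow_one, Function.iterate_zero, id_eq, sub_zero]
        rw [dunklD_C_mul, mcoef_succ_left γ (Nat.zero_le n)]
        push_cast
        simp only [map_mul, map_add, map_sub, map_one, map_natCast, map_ofNat, add_zero]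
        ring
      | succ i' =>
        simp only [hH]
        rw [dunklD_C_r2pow, Nat.add_sub_cancel, ← dunklLap_iter_dunklD, mcoef_pred γ n i',
          mcoef_succ_left γ hin, dunklLap_iter_X_mul α j i' q']
        push_cast
        simp only [map_mul, map_add, map_sub, map_one, map_natCast, map_ofNat]
        ring
    rw [Finset.sum_congr rfl key, Finset.sum_add_distrib, Finset.sum_range_sub H]
    have hHn : H (n + 1) = 0 := by
      simp only [hH, hzero1, mul_zero]
    have hH0 : H 0 = 0 := rfl
    rw [hHn, hH0, sub_zero, Finset.sum_range_succ _ (n + 1)]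
    rw [show (dunklLap α)^[n+1] (X j * q') = 0 from hzero2, mul_zero, mul_zero, add_zero]
lemma dunklLap_iter_sum {ι : Type*} (α : Fin (k + 1) → ℝ) (i : ℕ) (s : Finset ι)
    (f : ι → MvPolynomial (Fin (k + 1)) ℝ) :
    (dunklLap α)^[i] (∑ t ∈ s, f t) = ∑ t ∈ s, (dunklLap α)^[i] (f t) := by
  classical
  induction s using Finset.induction_on with
  | empty => simp [dunklLap_iter_zero]
  | insert a s hne ih =>
    rw [Finset.sum_insert hne, Finset.sum_insert hne, dunklLap_iter_add, ih]

lemma mcoef_zero_right (γ : ℝ) (m : ℕ) :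
    mcoef γ m 0 = 2 ^ m * ∏ t ∈ Finset.range m, (γ - t) := by
  simp [mcoef]

/-- Key polynomial identity for harmonic homogeneous `p`. -/
lemma polyB (α : Fin (k + 1) → ℝ) (γ : ℝ) (m : ℕ) (p : MvPolynomial (Fin (k + 1)) ℝ)
    (hp : p.IsHomogeneous m) (hharm : dunklLap α p = 0) :
    ∑ β ∈ p.support, coeff β p • (pairFold α γ β).2
      = (2 ^ m * ∏ t ∈ Finset.range m, (γ - t)) • p := by
  have h1 : ∀ β ∈ p.support, coeff β p • (pairFold α γ β).2
      = ∑ i ∈ Finset.range (m + 1),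
          C (mcoef γ m i) * (r2 ^ i * (dunklLap α)^[i] (monomial β (coeff β p))) := by
    intro β hβ
    rw [master α γ m β (mem_support_degree hp hβ), Finset.smul_sum]
    refine Finset.sum_congr rfl fun i _ => ?_
    rw [show (monomial β (coeff β p) : MvPolynomial (Fin (k+1)) ℝ)
        = coeff β p • monomial β 1 by rw [smul_monomial, smul_eq_mul, mul_one],
      dunklLap_iter_smul]
    rw [smul_eq_C_mul, smul_eq_C_mul]
    ring
  rw [Finset.sum_congr rfl h1, Finset.sum_comm]
  have h2 : ∀ i ∈ Finset.range (m + 1),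
      ∑ β ∈ p.support, C (mcoef γ m i) * (r2 ^ i * (dunklLap α)^[i] (monomial β (coeff β p)))
        = C (mcoef γ m i) * (r2 ^ i * (dunklLap α)^[i] p) := by
    intro i _
    rw [← Finset.mul_sum, ← Finset.mul_sum, ← dunklLap_iter_sum, support_sum_monomial_coeff]
  rw [Finset.sum_congr rfl h2, Finset.sum_range_succ']
  have h3 : ∀ i ∈ Finset.range m,
      C (mcoef γ m (i + 1)) * (r2 ^ (i + 1) * (dunklLap α)^[i + 1] p) = 0 := by
    intro i _
    rw [Function.iterate_succ_apply, hharm, dunklLap_iter_zero, mul_zero, mul_zero]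
  rw [Finset.sum_congr rfl h3, Finset.sum_const_zero, zero_add, pow_zero, one_mul,
    Function.iterate_zero, id_eq, mcoef_zero_right, smul_eq_C_mul]

lemma asc_eval (γ : ℝ) (m : ℕ) :
    ((-1 : ℝ)) ^ m * (ascPochhammer ℝ m).eval (-γ) = ∏ t ∈ Finset.range m, (γ - t) := by
  induction m with
  | zero => simp
  | succ m ih =>
    rw [ascPochhammer_succ_right, Polynomial.eval_mul, Finset.prod_range_succ, ← ih]
    simp only [Polynomial.eval_add, Polynomial.eval_X, Polynomial.eval_natCast]
    ring
section Analysis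

open ContinuousLinearMap

/-- The total derivative (as a CLM) of polynomial evaluation. -/
noncomputable def evalDeriv (q : MvPolynomial (Fin (k + 1)) ℝ) (y : Fin (k + 1) → ℝ) :
    (Fin (k + 1) → ℝ) →L[ℝ] ℝ :=
  ∑ i, eval y (pderiv i q) • (ContinuousLinearMap.proj i : (Fin (k + 1) → ℝ) →L[ℝ] ℝ)

lemma hasFDerivAt_eval (q : MvPolynomial (Fin (k + 1)) ℝ) (y : Fin (k + 1) → ℝ) :
    HasFDerivAt (fun z : Fin (k + 1) → ℝ => eval z q) (evalDeriv q y) y := by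
  classical
  induction q using MvPolynomial.induction_on generalizing y with
  | C a =>
    rw [show (fun z : Fin (k + 1) → ℝ => eval z (C a : MvPolynomial (Fin (k+1)) ℝ))
        = fun _ => a by funext z; simp]
    have : evalDeriv (C a : MvPolynomial (Fin (k+1)) ℝ) y = 0 := by
      unfold evalDeriv
      simp [pderiv_C]
    rw [this]
    exact hasFDerivAt_const a y
  | add p q hp hq =>
    have : evalDeriv (p + q) y = evalDeriv p y + evalDeriv q y := by
      unfold evalDeriv
      rw [← Finset.sum_add_distrib]
      refine Finset.sum_congr rfl fun i _ => ?_
      rw [map_add, map_add, add_smul]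
    rw [show (fun z : Fin (k + 1) → ℝ => eval z (p + q))
        = fun z => eval z p + eval z q by funext z; simp]
    rw [this]
    exact (hp y).add (hq y)
  | mul_X p n hp =>
    rw [show (fun z : Fin (k + 1) → ℝ => eval z (p * X n))
        = fun z => eval z p * z n by funext z; simp]
    have hmul := (hp y).mul (hasFDerivAt_apply (𝕜 := ℝ) n y)
    have heq : evalDeriv (p * X n) y
        = eval y p • (ContinuousLinearMap.proj n : (Fin (k + 1) → ℝ) →L[ℝ] ℝ)
          + y n • evalDeriv p y := by
      unfold evalDeriv
      have h1 : ∀ i : Fin (k + 1),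
          eval y (pderiv i (p * X n)) • (ContinuousLinearMap.proj i : (Fin (k + 1) → ℝ) →L[ℝ] ℝ)
          = (if n = i then eval y p else 0) • (ContinuousLinearMap.proj i : (Fin (k + 1) → ℝ) →L[ℝ] ℝ)
            + y n • (eval y (pderiv i p) • (ContinuousLinearMap.proj i : (Fin (k + 1) → ℝ) →L[ℝ] ℝ)) := by
        intro i
        rw [pderiv_mul, pderiv_X, map_add, map_mul, map_mul, eval_X, Pi.single_apply,
          apply_ite (eval y), map_one, map_zero]
        rw [add_smul, smul_smul]
        split_ifs <;> simp [mul_comm] <;> abel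
      rw [Finset.sum_congr rfl fun i _ => h1 i, Finset.sum_add_distrib, ← Finset.smul_sum]
      congr 1
      simp [Finset.sum_ite_eq]
    rw [heq]
    exact hmul
  done

lemma pderiv_r2 (j : Fin (k + 1)) : pderiv j (r2 : MvPolynomial (Fin (k+1)) ℝ) = 2 * X j := by
  classical
  have h : ∀ i : Fin (k + 1), pderiv j ((X i : MvPolynomial (Fin (k+1)) ℝ) ^ 2)
      = if i = j then 2 * X j else 0 := by
    intro i
    by_cases hij : i = j
    · subst hij
      rw [if_pos rfl, pow_two, pderiv_mul, pderiv_X_self]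
      ring
    · rw [if_neg hij, pow_two, pderiv_mul, pderiv_X_of_ne hij]
      simp
  rw [r2, map_sum]
  rw [Finset.sum_congr rfl fun i _ => h i, Finset.sum_ite_eq' Finset.univ j fun _ => 2 * X j]
  simp

lemma eval_r2 (y : Fin (k + 1) → ℝ) : eval y (r2 : MvPolynomial (Fin (k+1)) ℝ) = ∑ i, y i ^ 2 := by
  simp [r2]

lemma sum_sq_pos {y : Fin (k + 1) → ℝ} (hy : ∀ i, y i ≠ 0) : 0 < ∑ i, y i ^ 2 := by
  refine Finset.sum_pos' (fun i _ => sq_nonneg _) ⟨0, Finset.mem_univ _, ?_⟩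
  have := hy 0
  positivity

lemma isOpen_ne_zero : IsOpen {y : Fin (k + 1) → ℝ | ∀ i, y i ≠ 0} := by
  have : {y : Fin (k + 1) → ℝ | ∀ i, y i ≠ 0} = ⋂ i, ((fun y : Fin (k+1) → ℝ => y i) ⁻¹' {0}ᶜ) := by
    ext y; simp
  rw [this]
  exact isOpen_iInter_of_finite fun i => (isOpen_compl_singleton).preimage (continuous_apply i)

lemma eval_reflectVar (j : Fin (k + 1)) (q : MvPolynomial (Fin (k + 1)) ℝ)
    (y : Fin (k + 1) → ℝ) :
    eval y (reflectVar j q) = eval (Function.update y j (-(y j))) q := by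
  classical
  induction q using MvPolynomial.induction_on with
  | C a => simp [reflectVar]
  | add p q hp hq => rw [map_add, map_add, map_add, hp, hq]
  | mul_X p n hp =>
    rw [map_mul, map_mul, map_mul, hp, reflectVar_X, eval_X]
    congr 1
    by_cases hnj : n = j
    · subst hnj
      rw [if_pos rfl, map_neg, eval_X, Function.update_self]
    · rw [if_neg hnj, eval_X, Function.update_of_ne hnj]

lemma update_sum_sq (y : Fin (k + 1) → ℝ) (j : Fin (k + 1)) :
    ∑ i, (Function.update y j (-(y j)) i) ^ 2 = ∑ i, y i ^ 2 := by
  refine Finset.sum_congr rfl fun i _ => ?_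
  rw [Function.update_apply]
  split_ifs with h
  · subst h; ring
  · rfl

end Analysis

lemma evalDeriv_apply_single (q : MvPolynomial (Fin (k + 1)) ℝ) (x : Fin (k + 1) → ℝ)
    (j : Fin (k + 1)) : evalDeriv q x (Pi.single j 1) = eval x (pderiv j q) := by
  classical
  unfold evalDeriv
  rw [ContinuousLinearMap.sum_apply]
  have h1 : ∀ i : Fin (k + 1),
      (eval x (pderiv i q) • (ContinuousLinearMap.proj i : (Fin (k + 1) → ℝ) →L[ℝ] ℝ))
        (Pi.single j 1) = if i = j then eval x (pderiv i q) else 0 := by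
    intro i
    rw [ContinuousLinearMap.smul_apply, ContinuousLinearMap.proj_apply, Pi.single_apply,
      smul_eq_mul, mul_ite, mul_one, mul_zero]
  rw [Finset.sum_congr rfl fun i _ => h1 i,
    Finset.sum_ite_eq' Finset.univ j fun i => eval x (pderiv i q)]
  simp

lemma dunklF_G (α : Fin (k + 1) → ℝ) (j : Fin (k + 1)) (c : ℝ)
    (q : MvPolynomial (Fin (k + 1)) ℝ) (f : (Fin (k + 1) → ℝ) → ℝ)
    (hf : ∀ y : Fin (k + 1) → ℝ, (∀ i, y i ≠ 0) → f y = (∑ i, y i ^ 2) ^ c * eval y q)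
    (x : Fin (k + 1) → ℝ) (hx : ∀ i, x i ≠ 0) :
    dunklF α j f x = (∑ i, x i ^ 2) ^ (c - 1)
      * eval x (C (2 * c) * (X j * q) + r2 * dunklD α j q) := by
  have hS : 0 < ∑ i, x i ^ 2 := sum_sq_pos hx
  have hS0 : (∑ i, x i ^ 2) ≠ 0 := ne_of_gt hS
  set G : (Fin (k + 1) → ℝ) → ℝ := fun y => (∑ i, y i ^ 2) ^ c * eval y q with hG
  have hmem : {y : Fin (k + 1) → ℝ | ∀ i, y i ≠ 0} ∈ nhds x := isOpen_ne_zero.mem_nhds hx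
  have hEv : f =ᶠ[nhds x] G := Filter.eventuallyEq_of_mem hmem hf
  have hr2' : HasFDerivAt (fun z : Fin (k + 1) → ℝ => ∑ i, z i ^ 2) (evalDeriv r2 x) x := by
    have h := hasFDerivAt_eval (r2 : MvPolynomial (Fin (k+1)) ℝ) x
    simpa only [eval_r2] using h
  have hrpow : HasFDerivAt (fun z : Fin (k + 1) → ℝ => (∑ i, z i ^ 2) ^ c)
      ((c * (∑ i, x i ^ 2) ^ (c - 1)) • evalDeriv r2 x) x := hr2'.rpow_const (Or.inl hS0)
  have hGd : HasFDerivAt G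
      ((∑ i, x i ^ 2) ^ c • evalDeriv q x
        + eval x q • ((c * (∑ i, x i ^ 2) ^ (c - 1)) • evalDeriv r2 x)) x :=
    hrpow.mul (hasFDerivAt_eval q x)
  have hfder : fderiv ℝ f x (Pi.single j 1)
      = (∑ i, x i ^ 2) ^ c * eval x (pderiv j q)
        + eval x q * (c * (∑ i, x i ^ 2) ^ (c - 1) * (2 * x j)) := by
    rw [hEv.fderiv_eq, hGd.fderiv]
    rw [ContinuousLinearMap.add_apply, ContinuousLinearMap.smul_apply,
      ContinuousLinearMap.smul_apply, ContinuousLinearMap.smul_apply,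
      evalDeriv_apply_single, evalDeriv_apply_single, pderiv_r2]
    rw [map_mul, eval_X, show eval x (2 : MvPolynomial (Fin (k+1)) ℝ) = 2 by simp]
    simp only [smul_eq_mul]
    try ring
  have hupd : ∀ i, Function.update x j (-(x j)) i ≠ 0 := by
    intro i
    rw [Function.update_apply]
    split_ifs with h
    · exact neg_ne_zero.mpr (hx j)
    · exact hx i
  have hfx : f x = (∑ i, x i ^ 2) ^ c * eval x q := hf x hx
  have hfupd : f (Function.update x j (-(x j)))
      = (∑ i, x i ^ 2) ^ c * eval x (reflectVar j q) := by
    rw [hf _ hupd, update_sum_sq, eval_reflectVar]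
  have hdivPoly := congrArg (eval x) (X_mul_divMonomial_reflect j q)
  rw [map_mul, eval_X, map_sub] at hdivPoly
  -- hdivPoly : x j * eval x (divMonomial ...) = eval x q - eval x (reflectVar j q)
  have hevals : eval x (C (2 * c) * (X j * q) + r2 * dunklD α j q)
      = 2 * c * x j * eval x q + (∑ i, x i ^ 2)
          * (eval x (pderiv j q)
            + α j * eval x ((q - reflectVar j q).divMonomial (Finsupp.single j 1))) := by
    rw [dunklD]
    simp only [map_add, map_mul, eval_C, eval_X, eval_r2]
    ring
  have hdiff : α j * ((∑ i, x i ^ 2) ^ c * eval x q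
        - (∑ i, x i ^ 2) ^ c * eval x (reflectVar j q)) / x j
      = α j * (∑ i, x i ^ 2) ^ c
          * eval x ((q - reflectVar j q).divMonomial (Finsupp.single j 1)) := by
    rw [← mul_sub, ← hdivPoly]
    field_simp [hx j]
  rw [dunklF, hfder, hfx, hfupd, hdiff, hevals]
  rw [show ((∑ i, x i ^ 2) ^ c : ℝ) = (∑ i, x i ^ 2) ^ (c - 1) * (∑ i, x i ^ 2) by
    rw [Real.rpow_sub_one hS0]
    field_simp]
  ring

lemma dunklMonomialOp_zero (α : Fin (k + 1) → ℝ) (f : (Fin (k + 1) → ℝ) → ℝ) :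
    dunklMonomialOp α 0 f = f := by
  unfold dunklMonomialOp
  rw [ofFn_foldr_eq]
  exact foldr_iter_of_zero _ _ _ (fun i _ => rfl) f

lemma dunklMonomialOp_peel (α : Fin (k + 1) → ℝ) (β : Fin (k + 1) →₀ ℕ) (j : Fin (k + 1))
    (hj : β j ≠ 0) (hmin : ∀ i, i < j → β i = 0) (f : (Fin (k + 1) → ℝ) → ℝ) :
    dunklMonomialOp α β f = dunklF α j (dunklMonomialOp α (β - Finsupp.single j 1) f) := by
  unfold dunklMonomialOp
  rw [ofFn_foldr_eq, ofFn_foldr_eq]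
  exact foldr_iter_peel (dunklF α) β j hj hmin f

lemma opG (α : Fin (k + 1) → ℝ) (γ : ℝ) : ∀ (n : ℕ) (β : Fin (k + 1) →₀ ℕ),
    β.degree = n → ∀ x : Fin (k + 1) → ℝ, (∀ i, x i ≠ 0) →
    dunklMonomialOp α β (fun y => (∑ i, y i ^ 2) ^ γ) x
      = (∑ i, x i ^ 2) ^ (γ - (n : ℝ)) * eval x (pairFold α γ β).2 := by
  intro n
  induction n with
  | zero =>
    intro β hβ x hx
    rw [(Finsupp.degree_eq_zero_iff β).mp hβ, dunklMonomialOp_zero, pairFold_zero]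
    norm_num
  | succ n ih =>
    intro β hβ x hx
    have hβne : β ≠ 0 := by
      intro h; rw [h, map_zero] at hβ; omega
    obtain ⟨j, hj, hmin, hdeg⟩ := exists_min_support β hβne
    have hβ'deg : (β - Finsupp.single j 1).degree = n := by omega
    rw [dunklMonomialOp_peel α β j hj hmin]
    rw [dunklF_G α j (γ - (n : ℝ)) (pairFold α γ (β - Finsupp.single j 1)).2 _
      (fun y hy => ih _ hβ'deg y hy) x hx]
    rw [pairFold_peel α γ β j hj hmin]
    rw [show (pairStep α j (pairFold α γ (β - Finsupp.single j 1))).2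
        = C (2 * (pairFold α γ (β - Finsupp.single j 1)).1)
            * (X j * (pairFold α γ (β - Finsupp.single j 1)).2)
          + r2 * dunklD α j (pairFold α γ (β - Finsupp.single j 1)).2 from rfl]
    rw [pairFold_fst α γ n _ hβ'deg,
      show (γ - ((n + 1 : ℕ) : ℝ)) = γ - (n : ℝ) - 1 by push_cast; ring]


/-- Corollary 5.5: if `f_m` is a generalized spherical harmonic of degree `m`
(homogeneous with `Δ_α f_m = 0`) and `γ ∈ ℝ`, then
`r^{2(m-γ)} f_m(D_0,…,D_k)[r^{2γ}] = 2^m (-1)^m (-γ)_m f_m(x)`. -/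
theorem hobson_harmonic_rpow (α : Fin (k + 1) → ℝ) (m : ℕ)
    (p : MvPolynomial (Fin (k + 1)) ℝ) (hp : p.IsHomogeneous m)
    (hharm : dunklLap α p = 0)
    (γ : ℝ) (x : Fin (k + 1) → ℝ) (hx : ∀ j, x j ≠ 0) :
    (∑ i, (x i) ^ 2) ^ ((m : ℝ) - γ) * dunklOp α p (fun y => (∑ j, (y j) ^ 2) ^ γ) x =
      2 ^ m * (-1) ^ m * (ascPochhammer ℝ m).eval (-γ) * eval x p := by
  have hS : 0 < ∑ i, x i ^ 2 := sum_sq_pos hx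
  have h1 : dunklOp α p (fun y => (∑ j, (y j) ^ 2) ^ γ) x
      = ∑ β ∈ p.support, coeff β p
          * ((∑ i, x i ^ 2) ^ (γ - (m : ℝ)) * eval x (pairFold α γ β).2) := by
    unfold dunklOp
    refine Finset.sum_congr rfl fun β hβ => ?_
    rw [opG α γ m β (mem_support_degree hp hβ) x hx]
  rw [h1]
  have h2 : ∑ β ∈ p.support, coeff β p
        * ((∑ i, x i ^ 2) ^ (γ - (m : ℝ)) * eval x (pairFold α γ β).2)
      = (∑ i, x i ^ 2) ^ (γ - (m : ℝ))
        * eval x (∑ β ∈ p.support, coeff β p • (pairFold α γ β).2) := by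
    rw [map_sum, Finset.mul_sum]
    refine Finset.sum_congr rfl fun β hβ => ?_
    rw [smul_eq_C_mul, map_mul, eval_C]
    ring
  rw [h2, polyB α γ m p hp hharm]
  rw [smul_eq_C_mul, map_mul, eval_C]
  rw [← mul_assoc, ← mul_assoc, ← Real.rpow_add hS,
    show ((m : ℝ) - γ) + (γ - (m : ℝ)) = 0 by ring, Real.rpow_zero, one_mul]
  rw [← asc_eval γ m]
  ring
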